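/- Let ρ = q₁P_{φ+} + q₂P_{φ−} + q₃P_{ψ+} + q₄P_{ψ−} be a Bell-diagonal state on ℂ² ⊗ ℂ², and let t_{ii} = tr((σ_i ⊗ σ_i) ρ) for i = 1,2,3 (the Pauli matrices). Then the minimum, over all product orthonormal bases {e_i ⊗ f_j : i,j = 1,2} of ℂ² ⊗ ℂ² (with {e_1,e_2} and {f_1,f_2} orthonormal bases of the two qubits), of the Shannon entropy of the outcome distribution p_{ij} = ⟨e_i ⊗ f_j, ρ (e_i ⊗ f_j)⟩ equals 1 + h(p_max), where p_max = (1 + max_i |t_{ii}|)/2. -/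

import Mathlib

/-! Expanding `ρ = (1 + ∑ₖ tₖ σₖ ⊗ σₖ) / 4` shows that for unit vectors `e`, `f` with Bloch vectors
`a`, `b` one has `⟨e ⊗ f, ρ (e ⊗ f)⟩ = (1 + ∑ₖ tₖ aₖ bₖ) / 4`. The two vectors of an orthonormal basis
of `ℂ²` have opposite Bloch vectors (their sum is `tr σₖ = 0`), so the outcome distribution is
`((1 + C)/4, (1 - C)/4, (1 - C)/4, (1 + C)/4)` with `C = ∑ₖ tₖ aₖ bₖ`, whose entropy is
`1 + h((1 + C)/2)`. This decreases in `|C|`, and `|C| ≤ maxₖ |tₖ|` since `a`, `b` are unit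
vectors, with equality for a suitable pair of eigenbases of one Pauli matrix `σₖ`. -/

open Matrix
open scoped Kronecker ComplexOrder

/-- binary entropy (base 2). -/
noncomputable def binEnt (p : ℝ) : ℝ :=
  -(p * Real.logb 2 p) - (1 - p) * Real.logb 2 (1 - p)

/-- The four Bell state vectors in ℂ² ⊗ ℂ²: `φ⁺, φ⁻, ψ⁺, ψ⁻`. -/
noncomputable def bellVec : Fin 4 → (Fin 2 × Fin 2 → ℂ)
  | 0 => fun x => if x = (0, 0) then (1 / Real.sqrt 2 : ℝ)
      else if x = (1, 1) then (1 / Real.sqrt 2 : ℝ) else 0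
  | 1 => fun x => if x = (0, 0) then (1 / Real.sqrt 2 : ℝ)
      else if x = (1, 1) then -(1 / Real.sqrt 2 : ℝ) else 0
  | 2 => fun x => if x = (0, 1) then (1 / Real.sqrt 2 : ℝ)
      else if x = (1, 0) then (1 / Real.sqrt 2 : ℝ) else 0
  | 3 => fun x => if x = (0, 1) then (1 / Real.sqrt 2 : ℝ)
      else if x = (1, 0) then -(1 / Real.sqrt 2 : ℝ) else 0

/-- The Pauli matrices σ₁, σ₂, σ₃. -/
noncomputable def pauli : Fin 3 → Matrix (Fin 2) (Fin 2) ℂ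
  | 0 => !![0, 1; 1, 0]
  | 1 => !![0, -Complex.I; Complex.I, 0]
  | 2 => !![1, 0; 0, -1]

lemma binEnt_eq_binEntropy_div_log (p : ℝ) : binEnt p = Real.binEntropy p / Real.log 2 := by
  simp only [binEnt, Real.binEntropy, Real.logb, Real.log_inv]
  ring

lemma half_mul_logb_half (x : ℝ) : x / 2 * Real.logb 2 (x / 2) = (x * Real.logb 2 x - x) / 2 := by
  rcases eq_or_ne x 0 with rfl | hx
  · simp
  rw [Real.logb_div hx two_ne_zero, Real.logb_self_eq_one one_lt_two]
  ring

lemma neg_sum_half_mul_logb_half (p : ℝ) :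
    -(p / 2 * Real.logb 2 (p / 2) + (1 - p) / 2 * Real.logb 2 ((1 - p) / 2)
      + ((1 - p) / 2 * Real.logb 2 ((1 - p) / 2) + p / 2 * Real.logb 2 (p / 2)))
      = 1 + binEnt p := by
  rw [half_mul_logb_half, half_mul_logb_half, binEnt]
  ring

lemma binEnt_one_add_div_two_abs (c : ℝ) : binEnt ((1 + |c|) / 2) = binEnt ((1 + c) / 2) := by
  rcases abs_cases c with ⟨h, _⟩ | ⟨h, _⟩
  · rw [h]
  · rw [h, binEnt_eq_binEntropy_div_log, binEnt_eq_binEntropy_div_log,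
      show (1 + -c) / 2 = 1 - (1 + c) / 2 by ring, Real.binEntropy_one_sub]

lemma binEnt_le_of_abs_le {c T : ℝ} (hc : |c| ≤ T) (hT : T ≤ 1) :
    binEnt ((1 + T) / 2) ≤ binEnt ((1 + c) / 2) := by
  rw [← binEnt_one_add_div_two_abs c, binEnt_eq_binEntropy_div_log,
    binEnt_eq_binEntropy_div_log]
  have hc0 := abs_nonneg c
  gcongr
  exact Real.binEntropy_strictAntiOn.antitoneOn ⟨by linarith, by linarith⟩
    ⟨by linarith, by linarith⟩ (by linarith)

lemma abs_sum_mul_mul_le {ι : Type*} [Fintype ι] {t a b : ι → ℝ} {T : ℝ}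
    (ht : ∀ k, |t k| ≤ T) (ha : ∑ k, a k ^ 2 = 1) (hb : ∑ k, b k ^ 2 = 1) :
    |∑ k, t k * a k * b k| ≤ T :=
  calc |∑ k, t k * a k * b k| ≤ ∑ k, |t k * a k * b k| := Finset.abs_sum_le_sum_abs _ _
    _ ≤ ∑ k, T * ((a k ^ 2 + b k ^ 2) / 2) := by
      gcongr with k
      have hT : 0 ≤ T := (abs_nonneg _).trans (ht k)
      rw [abs_mul, abs_mul]
      nlinarith [ht k, sq_nonneg (|a k| - |b k|), sq_abs (a k), sq_abs (b k),
        mul_nonneg (abs_nonneg (a k)) (abs_nonneg (b k))]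
    _ = T := by rw [← Finset.mul_sum, ← Finset.sum_div, Finset.sum_add_distrib, ha, hb]; ring

lemma abs_le_max_abs (t : Fin 3 → ℝ) (k : Fin 3) : |t k| ≤ max (|t 0|) (max (|t 1|) (|t 2|)) := by
  fin_cases k <;> simp

lemma exists_abs_eq_max_abs (t : Fin 3 → ℝ) : ∃ k, |t k| = max (|t 0|) (max (|t 1|) (|t 2|)) := by
  rcases max_choice (|t 0|) (max (|t 1|) (|t 2|)) with h | h
  · exact ⟨0, h.symm⟩
  rcases max_choice (|t 1|) (|t 2|) with h' | h'
  · exact ⟨1, (h.trans h').symm⟩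
  · exact ⟨2, (h.trans h').symm⟩

def IsOrthonormalFamily {m n R : Type*} [Fintype n] [DecidableEq m] [Semiring R] [Star R]
    (e : m → n → R) : Prop :=
  ∀ i j, star (e i) ⬝ᵥ e j = if i = j then 1 else 0

lemma IsOrthonormalFamily.comp_perm {m n R : Type*} [Fintype n] [DecidableEq m] [Semiring R]
    [Star R] {e : m → n → R} (he : IsOrthonormalFamily e) (σ : Equiv.Perm m) :
    IsOrthonormalFamily (e ∘ σ) := by
  intro i j
  simp only [Function.comp_apply, he (σ i) (σ j), σ.injective.eq_iff]

lemma IsOrthonormalFamily.sum_dotProduct_mulVec {n R : Type*} [Fintype n] [DecidableEq n]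
    [CommRing R] [StarRing R] {e : n → n → R} (he : IsOrthonormalFamily e) (A : Matrix n n R) :
    ∑ i, star (e i) ⬝ᵥ (A *ᵥ e i) = A.trace := by
  set M : Matrix n n R := (Matrix.of e)ᵀ
  have hM : Mᴴ * M = 1 := by
    ext i j
    simpa [M, Matrix.mul_apply, dotProduct, Matrix.one_apply] using he i j
  calc ∑ i, star (e i) ⬝ᵥ (A *ᵥ e i) = (Mᴴ * (A * M)).trace := by
        simp [M, Matrix.trace, Matrix.mul_apply, dotProduct, Matrix.mulVec, Finset.mul_sum]
    _ = A.trace := by rw [Matrix.trace_mul_comm, Matrix.mul_assoc, mul_eq_one_comm.mp hM, mul_one]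

lemma dotProduct_kronecker_mulVec_prod {m n R : Type*} [Fintype m] [Fintype n] [CommRing R]
    [StarRing R] (A : Matrix m m R) (B : Matrix n n R) (e : m → R) (f : n → R) :
    star (fun x : m × n => e x.1 * f x.2) ⬝ᵥ ((A ⊗ₖ B) *ᵥ fun x : m × n => e x.1 * f x.2)
      = (star e ⬝ᵥ (A *ᵥ e)) * (star f ⬝ᵥ (B *ᵥ f)) := by
  simp only [dotProduct, Matrix.mulVec, Fintype.sum_prod_type, kroneckerMap_apply,
    Pi.star_apply, star_mul']
  rw [Finset.sum_mul_sum]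
  refine Finset.sum_congr rfl fun x _ => Finset.sum_congr rfl fun y _ => ?_
  rw [mul_mul_mul_comm, Finset.sum_mul_sum]
  congr 1
  refine Finset.sum_congr rfl fun x' _ => Finset.sum_congr rfl fun y' _ => ?_
  ring

lemma inv_ofReal_sqrt_two_sq : ((Real.sqrt 2 : ℂ))⁻¹ ^ 2 = 1 / 2 := by
  rw [← Complex.ofReal_inv, ← Complex.ofReal_pow, inv_pow, Real.sq_sqrt zero_le_two]
  norm_num

lemma trace_pauli (k : Fin 3) : (pauli k).trace = 0 := by
  fin_cases k <;> simp [pauli, Matrix.trace_fin_two]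

lemma trace_pauli_mul_pauli (j k : Fin 3) :
    (pauli j * pauli k).trace = if j = k then 2 else 0 := by
  fin_cases j <;> fin_cases k <;> simp [pauli, Matrix.trace_fin_two] <;> norm_num

noncomputable def blochVec (v : Fin 2 → ℂ) (k : Fin 3) : ℝ := (star v ⬝ᵥ (pauli k *ᵥ v)).re

lemma ofReal_blochVec (v : Fin 2 → ℂ) (k : Fin 3) :
    (blochVec v k : ℂ) = star v ⬝ᵥ (pauli k *ᵥ v) := by
  refine Complex.ext (by simp [blochVec]) ?_
  fin_cases k <;>
    simp [blochVec, dotProduct, Matrix.mulVec, pauli, Fin.sum_univ_two, Complex.mul_im] <;> ring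

lemma sum_blochVec_sq (v : Fin 2 → ℂ) : ∑ k, blochVec v k ^ 2 = (star v ⬝ᵥ v).re ^ 2 := by
  simp [blochVec, dotProduct, Matrix.mulVec, pauli, Fin.sum_univ_two, Fin.sum_univ_three,
    Complex.mul_re, Complex.mul_im]
  ring

lemma IsOrthonormalFamily.sum_blochVec_sq {e : Fin 2 → Fin 2 → ℂ} (he : IsOrthonormalFamily e)
    (i : Fin 2) : ∑ k, blochVec (e i) k ^ 2 = 1 := by
  rw [_root_.sum_blochVec_sq, he i i]
  simp

lemma blochVec_one_eq_neg {e : Fin 2 → Fin 2 → ℂ} (he : IsOrthonormalFamily e) :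
    blochVec (e 1) = -blochVec (e 0) := by
  ext k
  have h := he.sum_dotProduct_mulVec (pauli k)
  rw [Fin.sum_univ_two, trace_pauli, ← ofReal_blochVec, ← ofReal_blochVec] at h
  have h' : blochVec (e 0) k + blochVec (e 1) k = 0 := by exact_mod_cast h
  simp only [Pi.neg_apply]
  linarith

noncomputable def pauliEigenbasis : Fin 3 → Fin 2 → Fin 2 → ℂ
  | 0 => ![![(Real.sqrt 2)⁻¹, (Real.sqrt 2)⁻¹], ![(Real.sqrt 2)⁻¹, -(Real.sqrt 2 : ℂ)⁻¹]]
  | 1 => ![![(Real.sqrt 2)⁻¹, (Real.sqrt 2)⁻¹ * Complex.I],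
          ![(Real.sqrt 2)⁻¹, -((Real.sqrt 2)⁻¹ * Complex.I)]]
  | 2 => ![![1, 0], ![0, 1]]

lemma isOrthonormalFamily_pauliEigenbasis (k : Fin 3) :
    IsOrthonormalFamily (pauliEigenbasis k) := by
  intro i j
  fin_cases k <;> fin_cases i <;> fin_cases j <;>
    simp [pauliEigenbasis, dotProduct, Fin.sum_univ_two, Complex.conj_ofReal, mul_comm] <;>
    (ring_nf; try simp only [Complex.I_sq, inv_ofReal_sqrt_two_sq]) <;>
    ring

lemma blochVec_pauliEigenbasis_zero (k : Fin 3) :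
    blochVec (pauliEigenbasis k 0) = Pi.single k 1 := by
  have h := Real.mul_self_sqrt (zero_le_two : (0 : ℝ) ≤ 2)
  have hpos : 0 < Real.sqrt 2 := by positivity
  ext j
  fin_cases k <;> fin_cases j <;>
    simp [blochVec, pauliEigenbasis, pauli, dotProduct, Matrix.mulVec, Fin.sum_univ_two,
      Complex.mul_re, Complex.mul_im, Complex.conj_ofReal] <;>
    field_simp <;> linarith

lemma exists_isOrthonormalFamily_sum_mul_blochVec_eq_abs (t : Fin 3 → ℝ) (k : Fin 3) :
    ∃ e f : Fin 2 → Fin 2 → ℂ, IsOrthonormalFamily e ∧ IsOrthonormalFamily f ∧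
      ∑ j, t j * blochVec (e 0) j * blochVec (f 0) j = |t k| := by
  have hE := isOrthonormalFamily_pauliEigenbasis k
  rcases abs_cases (t k) with ⟨h, _⟩ | ⟨h, _⟩
  · refine ⟨pauliEigenbasis k, pauliEigenbasis k, hE, hE, ?_⟩
    simp [blochVec_pauliEigenbasis_zero, h, Pi.single_apply]
  · refine ⟨pauliEigenbasis k, pauliEigenbasis k ∘ Equiv.swap 0 1, hE, hE.comp_perm _, ?_⟩
    simp [blochVec_one_eq_neg hE, blochVec_pauliEigenbasis_zero, h, Pi.single_apply]

noncomputable def bellDiagonal (t : Fin 3 → ℝ) : Matrix (Fin 2 × Fin 2) (Fin 2 × Fin 2) ℂ :=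
  (1 / 4 : ℂ) • (1 + ∑ k, (t k : ℂ) • (pauli k ⊗ₖ pauli k))

lemma trace_pauli_kronecker_mul_bellDiagonal (t : Fin 3 → ℝ) (k : Fin 3) :
    ((pauli k ⊗ₖ pauli k) * bellDiagonal t).trace = t k := by
  simp only [bellDiagonal, Matrix.mul_smul, Matrix.mul_add, Matrix.mul_one, Matrix.mul_sum,
    ← Matrix.mul_kronecker_mul, Matrix.trace_smul, Matrix.trace_add,
    Matrix.trace_sum, Matrix.trace_kronecker, trace_pauli, trace_pauli_mul_pauli]
  simp only [mul_zero, mul_ite, ite_mul, zero_mul, smul_eq_mul, Finset.sum_ite_eq,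
    Finset.mem_univ, ↓reduceIte, zero_add]
  ring

-- `P_{φ±}` has correlations `(±1, ∓1, 1)` and `P_{ψ±}` has `(±1, ±1, -1)`.
noncomputable def bellCorr (q : Fin 4 → ℝ) : Fin 3 → ℝ :=
  ![q 0 - q 1 + q 2 - q 3, -q 0 + q 1 + q 2 - q 3, q 0 + q 1 - q 2 - q 3]

lemma abs_bellCorr_le_one {q : Fin 4 → ℝ} (hq : ∀ i, 0 ≤ q i) (hqsum : ∑ i, q i = 1)
    (k : Fin 3) : |bellCorr q k| ≤ 1 := by
  rw [Fin.sum_univ_four] at hqsum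
  have := hq 0; have := hq 1; have := hq 2; have := hq 3
  fin_cases k <;> simp [bellCorr, abs_le] <;> constructor <;> linarith

lemma sum_smul_bell_projection {q : Fin 4 → ℝ} (hqsum : ∑ i, q i = 1) :
    ∑ i, (q i : ℂ) • vecMulVec (bellVec i) (star (bellVec i)) = bellDiagonal (bellCorr q) := by
  have hq : ((q 0 : ℂ) + q 1 + q 2 + q 3) = 1 := by
    rw [Fin.sum_univ_four] at hqsum
    exact_mod_cast hqsum
  ext ⟨x, y⟩ ⟨x', y'⟩
  fin_cases x <;> fin_cases y <;> fin_cases x' <;> fin_cases y' <;>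
    simp [bellDiagonal, bellCorr, bellVec, pauli, Fin.sum_univ_four, Fin.sum_univ_three,
      vecMulVec_apply] <;>
    (ring_nf; try simp only [inv_ofReal_sqrt_two_sq]) <;>
    first
      | linear_combination (1 / 4 : ℂ) * hq
      | ring

lemma dotProduct_bellDiagonal_mulVec_prod (t : Fin 3 → ℝ) {e f : Fin 2 → ℂ}
    (he : star e ⬝ᵥ e = 1) (hf : star f ⬝ᵥ f = 1) :
    star (fun x : Fin 2 × Fin 2 => e x.1 * f x.2) ⬝ᵥ
        (bellDiagonal t *ᵥ fun x : Fin 2 × Fin 2 => e x.1 * f x.2)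
      = (((1 + ∑ k, t k * blochVec e k * blochVec f k) / 4 : ℝ) : ℂ) := by
  rw [bellDiagonal, ← Matrix.one_kronecker_one]
  simp only [Matrix.smul_mulVec, Matrix.add_mulVec, Matrix.sum_mulVec, dotProduct_smul,
    dotProduct_add, dotProduct_sum, dotProduct_kronecker_mulVec_prod, Matrix.one_mulVec, he, hf,
    ← ofReal_blochVec]
  push_cast
  simp only [smul_eq_mul, mul_assoc]
  ring

noncomputable def outcomeProb {m n : Type*} [Fintype m] [Fintype n]
    (ρ : Matrix (m × n) (m × n) ℂ) (e : m → m → ℂ) (f : n → n → ℂ) (i : m) (j : n) : ℝ :=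
  (star (fun x : m × n => e i x.1 * f j x.2) ⬝ᵥ (ρ *ᵥ fun x : m × n => e i x.1 * f j x.2)).re

lemma outcomeProb_bellDiagonal (t : Fin 3 → ℝ) {e f : Fin 2 → Fin 2 → ℂ}
    (he : IsOrthonormalFamily e) (hf : IsOrthonormalFamily f) (i j : Fin 2) :
    outcomeProb (bellDiagonal t) e f i j
      = (1 + ∑ k, t k * blochVec (e i) k * blochVec (f j) k) / 4 := by
  have hei : star (e i) ⬝ᵥ e i = 1 := by simpa using he i i
  have hfj : star (f j) ⬝ᵥ f j = 1 := by simpa using hf j j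
  rw [outcomeProb, dotProduct_bellDiagonal_mulVec_prod t hei hfj, Complex.ofReal_re]

lemma neg_sum_outcomeProb_mul_logb_bellDiagonal (t : Fin 3 → ℝ) {e f : Fin 2 → Fin 2 → ℂ}
    (he : IsOrthonormalFamily e) (hf : IsOrthonormalFamily f) :
    -∑ i, ∑ j, outcomeProb (bellDiagonal t) e f i j
        * Real.logb 2 (outcomeProb (bellDiagonal t) e f i j)
      = 1 + binEnt ((1 + ∑ k, t k * blochVec (e 0) k * blochVec (f 0) k) / 2) := by
  simp only [Fin.sum_univ_two, outcomeProb_bellDiagonal t he hf, blochVec_one_eq_neg he,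
    blochVec_one_eq_neg hf, Pi.neg_apply, mul_neg, neg_mul, neg_neg, Finset.sum_neg_distrib]
  generalize ∑ k, t k * blochVec (e 0) k * blochVec (f 0) k = C
  rw [← neg_sum_half_mul_logb_half]
  ring_nf

/-- For a Bell-diagonal state ρ with correlation coefficients
`t_i = tr((σ_i ⊗ σ_i) ρ)`, the minimum over product orthonormal bases of the Shannon entropy of
the outcome distribution `p_{ij} = ⟨e_i ⊗ f_j, ρ (e_i ⊗ f_j)⟩` equals `1 + h(p_max)` with
`p_max = (1 + max_i |t_i|)/2`. -/
theorem min_shannon_entropy_product_basis_bell_diagonal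
    (q : Fin 4 → ℝ) (hq : ∀ i, 0 ≤ q i) (hqsum : ∑ i, q i = 1)
    (ρ : Matrix (Fin 2 × Fin 2) (Fin 2 × Fin 2) ℂ)
    (hρ : ρ = ∑ i, (q i : ℂ) • vecMulVec (bellVec i) (star (bellVec i)))
    (t : Fin 3 → ℝ)
    (ht : ∀ i, t i = (((pauli i ⊗ₖ pauli i) * ρ).trace).re) :
    sInf {r : ℝ | ∃ (e f : Fin 2 → (Fin 2 → ℂ)),
        (∀ i j, star (e i) ⬝ᵥ e j = if i = j then 1 else 0) ∧
        (∀ i j, star (f i) ⬝ᵥ f j = if i = j then 1 else 0) ∧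
        r = -∑ i, ∑ j,
          ((star (fun x : Fin 2 × Fin 2 => e i x.1 * f j x.2) ⬝ᵥ
              (ρ *ᵥ fun x : Fin 2 × Fin 2 => e i x.1 * f j x.2)).re) *
            Real.logb 2 ((star (fun x : Fin 2 × Fin 2 => e i x.1 * f j x.2) ⬝ᵥ
              (ρ *ᵥ fun x : Fin 2 × Fin 2 => e i x.1 * f j x.2)).re)}
      = 1 + binEnt ((1 + max (|t 0|) (max (|t 1|) (|t 2|))) / 2) := by
  have hρq : ρ = bellDiagonal (bellCorr q) := hρ.trans (sum_smul_bell_projection hqsum)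
  have htq : t = bellCorr q := funext fun k => by
    rw [ht, hρq, trace_pauli_kronecker_mul_bellDiagonal, Complex.ofReal_re]
  have ht1 : ∀ k, |t k| ≤ 1 := htq ▸ abs_bellCorr_le_one hq hqsum
  rw [← htq] at hρq
  subst hρq
  obtain ⟨k, hk⟩ := exists_abs_eq_max_abs t
  refine IsLeast.csInf_eq ⟨?_, ?_⟩
  · obtain ⟨e, f, he, hf, hC⟩ := exists_isOrthonormalFamily_sum_mul_blochVec_eq_abs t k
    refine ⟨e, f, he, hf, ?_⟩
    rw [← hk, ← hC]
    exact (neg_sum_outcomeProb_mul_logb_bellDiagonal t he hf).symm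
  · rintro r ⟨e, f, he, hf, rfl⟩
    have hC := abs_sum_mul_mul_le (abs_le_max_abs t) (IsOrthonormalFamily.sum_blochVec_sq he 0)
      (IsOrthonormalFamily.sum_blochVec_sq hf 0)
    exact (add_le_add_right (binEnt_le_of_abs_le hC (hk ▸ ht1 k)) 1).trans_eq
      (neg_sum_outcomeProb_mul_logb_bellDiagonal t he hf).symm
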